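/- arXiv:2402.08328 — 4 statements merged into one kernel-verified Lean document; each statement's English description precedes it below -/
import Mathlib

section
/- Let S be a positive definite d×d matrix, fix distinct indices i, j with j ∈ d(i), fix ψ ∈ ℝ, and let d(·) be descendant sets of a complete DAG. Then the minimum of tr((I-T)^T(I-T)S) over matrices T with row supports T_{k,·} ⊆ d(k) and with the additional constraint T_{i,j} = -ψ equals Σ_{k≠i} S_{k,k|d(k)} + S_{i,i|d(i)\{j}} + ψ²·S_{j,j|d(i)\{j}} + 2ψ·S_{i,j|d(i)\{j}}. -/
open Matrix

/-- Conditional covariance (Schur complement) `S_{a,b|D} = S_{a,b} - S_{a,D}(S_{D,D})⁻¹S_{D,b}`. -/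
noncomputable def condCov {d : ℕ} (S : Matrix (Fin d) (Fin d) ℝ) (a b : Fin d)
    (D : Finset (Fin d)) : ℝ :=
  S a b - (fun x : ↥D => S a x) ⬝ᵥ ((fun x y : ↥D => S x y)⁻¹ *ᵥ fun x : ↥D => S x b)

/-- Descendant set of `k` for the complete DAG given by the ordering `ord`. -/
def desc {d : ℕ} (ord : Equiv.Perm (Fin d)) (k : Fin d) : Finset (Fin d) :=
  Finset.univ.filter fun l => ord k < ord l

lemma quad_expand {n : Type*} [Fintype n] {A : Matrix n n ℝ} (hA : Aᵀ = A)
    (b t t₀ : n → ℝ) (hb : A *ᵥ t₀ = b) (c : ℝ) :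
    c - 2 * (b ⬝ᵥ t) + t ⬝ᵥ (A *ᵥ t)
      = (c - b ⬝ᵥ t₀) + (t - t₀) ⬝ᵥ (A *ᵥ (t - t₀)) := by
  have h1 : t₀ ⬝ᵥ (A *ᵥ t) = b ⬝ᵥ t := by
    rw [dotProduct_mulVec, ← mulVec_transpose, hA, hb]
  have h2 : t ⬝ᵥ (A *ᵥ t₀) = b ⬝ᵥ t := by rw [hb, dotProduct_comm]
  have h3 : t₀ ⬝ᵥ (A *ᵥ t₀) = b ⬝ᵥ t₀ := by rw [hb, dotProduct_comm]
  rw [mulVec_sub, sub_dotProduct, dotProduct_sub, dotProduct_sub, h1, h2, h3]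
  ring

lemma quad_le {n : Type*} [Fintype n] [DecidableEq n] {A : Matrix n n ℝ} (hA : A.PosDef)
    (b : n → ℝ) (c : ℝ) (t : n → ℝ) :
    c - b ⬝ᵥ (A⁻¹ *ᵥ b) ≤ c - 2 * (b ⬝ᵥ t) + t ⬝ᵥ (A *ᵥ t) := by
  have hb : A *ᵥ (A⁻¹ *ᵥ b) = b := by
    rw [mulVec_mulVec, Matrix.mul_nonsing_inv _ hA.det_pos.ne'.isUnit, one_mulVec]
  have hAt : Aᵀ = A := by ext x y; simpa using congrFun (congrFun hA.isHermitian x) y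
  rw [quad_expand hAt b t (A⁻¹ *ᵥ b) hb c]
  have := hA.posSemidef.dotProduct_mulVec_nonneg (t - A⁻¹ *ᵥ b)
  simp only [RCLike.star_def, star_trivial] at this
  linarith [this]

lemma quad_eq {n : Type*} [Fintype n] [DecidableEq n] {A : Matrix n n ℝ} (hA : A.PosDef)
    (b : n → ℝ) (c : ℝ) :
    c - 2 * (b ⬝ᵥ (A⁻¹ *ᵥ b)) + (A⁻¹ *ᵥ b) ⬝ᵥ (A *ᵥ (A⁻¹ *ᵥ b)) = c - b ⬝ᵥ (A⁻¹ *ᵥ b) := by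
  have hb : A *ᵥ (A⁻¹ *ᵥ b) = b := by
    rw [mulVec_mulVec, Matrix.mul_nonsing_inv _ hA.det_pos.ne'.isUnit, one_mulVec]
  have hAt : Aᵀ = A := by ext x y; simpa using congrFun (congrFun hA.isHermitian x) y
  rw [quad_expand hAt b _ (A⁻¹ *ᵥ b) hb c]
  simp

variable {d : ℕ}

noncomputable def extZ {D : Finset (Fin d)} (t : ↥D → ℝ) : Fin d → ℝ :=
  fun l => if h : l ∈ D then t ⟨l, h⟩ else 0

lemma extZ_restrict {D : Finset (Fin d)} (t : ↥D → ℝ) :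
    (fun x : ↥D => extZ t ↑x) = t := by
  funext x; simp [extZ]

lemma extZ_support {D : Finset (Fin d)} (t : ↥D → ℝ) : ∀ l ∉ D, extZ t l = 0 := by
  intro l hl; simp [extZ, hl]

lemma dot_restrict (D : Finset (Fin d)) (f u : Fin d → ℝ) (hu : ∀ l ∉ D, u l = 0) :
    f ⬝ᵥ u = (fun x : ↥D => f ↑x) ⬝ᵥ fun x : ↥D => u ↑x := by
  unfold dotProduct
  rw [Finset.sum_coe_sort D (fun l => f l * u l)]
  exact (Finset.sum_subset (Finset.subset_univ D)
    (fun l _ hl => by simp [hu l hl])).symm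

lemma quad_restrict (S : Matrix (Fin d) (Fin d) ℝ) (D : Finset (Fin d))
    (u : Fin d → ℝ) (hu : ∀ l ∉ D, u l = 0) :
    u ⬝ᵥ (S *ᵥ u) = (fun x : ↥D => u ↑x) ⬝ᵥ
      ((fun x y : ↥D => S ↑x ↑y) *ᵥ fun x : ↥D => u ↑x) := by
  rw [dotProduct_comm, dot_restrict D _ u hu, dotProduct_comm]
  congr 1
  funext x
  show (fun m => S ↑x m) ⬝ᵥ u = _
  rw [dot_restrict D _ u hu]
  rfl

lemma transpose_eq_of_posDef {n : Type*} [Fintype n] {A : Matrix n n ℝ} (hA : A.PosDef) :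
    Aᵀ = A := by
  ext x y; simpa using congrFun (congrFun hA.isHermitian x) y

lemma posdef_sub {S : Matrix (Fin d) (Fin d) ℝ} (hS : S.PosDef) (D : Finset (Fin d)) :
    Matrix.PosDef (fun x y : ↥D => S ↑x ↑y) := by
  have hSt : Sᵀ = S := transpose_eq_of_posDef hS
  refine Matrix.PosDef.of_dotProduct_mulVec_pos ?_ ?_
  · ext x y
    exact congrFun (congrFun hSt ↑x) ↑y
  · intro t ht
    have h1 : (fun x : ↥D => extZ t ↑x) = t := extZ_restrict t
    have h2 : extZ t ⬝ᵥ (S *ᵥ extZ t) = t ⬝ᵥ ((fun x y : ↥D => S ↑x ↑y) *ᵥ t) := by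
      rw [quad_restrict S D (extZ t) (extZ_support t), h1]
    have hne : extZ t ≠ 0 := by
      intro h0
      apply ht
      funext x
      have := congrFun h0 ↑x
      simpa [extZ, x.2] using this
    have := hS.dotProduct_mulVec_pos hne
    simpa [star_trivial, ← h2] using this

lemma row_expand (S : Matrix (Fin d) (Fin d) ℝ) (hSt : Sᵀ = S) (D : Finset (Fin d))
    (v u : Fin d → ℝ) (hu : ∀ l ∉ D, u l = 0) :
    (v - u) ⬝ᵥ (S *ᵥ (v - u)) =
      v ⬝ᵥ (S *ᵥ v) - 2 * ((fun x : ↥D => (S *ᵥ v) ↑x) ⬝ᵥ fun x : ↥D => u ↑x)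
        + (fun x : ↥D => u ↑x) ⬝ᵥ ((fun x y : ↥D => S ↑x ↑y) *ᵥ fun x : ↥D => u ↑x) := by
  have hvSu : v ⬝ᵥ (S *ᵥ u) = (S *ᵥ v) ⬝ᵥ u := by
    rw [dotProduct_mulVec, ← mulVec_transpose, hSt]
  have huSv : u ⬝ᵥ (S *ᵥ v) = (S *ᵥ v) ⬝ᵥ u := dotProduct_comm _ _
  simp only [mulVec_sub, sub_dotProduct, dotProduct_sub]
  rw [hvSu, huSv, quad_restrict S D u hu, dot_restrict D (S *ᵥ v) u hu]
  ring

noncomputable def mval (S : Matrix (Fin d) (Fin d) ℝ) (D : Finset (Fin d)) (v : Fin d → ℝ) : ℝ :=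
  v ⬝ᵥ (S *ᵥ v) - (fun x : ↥D => (S *ᵥ v) ↑x) ⬝ᵥ
    ((fun x y : ↥D => S ↑x ↑y)⁻¹ *ᵥ fun x : ↥D => (S *ᵥ v) ↑x)

lemma row_lb {S : Matrix (Fin d) (Fin d) ℝ} (hS : S.PosDef) (D : Finset (Fin d))
    (v u : Fin d → ℝ) (hu : ∀ l ∉ D, u l = 0) :
    mval S D v ≤ (v - u) ⬝ᵥ (S *ᵥ (v - u)) := by
  rw [row_expand S (transpose_eq_of_posDef hS) D v u hu]
  exact quad_le (posdef_sub hS D) _ _ _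

noncomputable def optRow {d : ℕ} (S : Matrix (Fin d) (Fin d) ℝ) (D : Finset (Fin d))
    (v : Fin d → ℝ) : Fin d → ℝ :=
  extZ ((fun x y : ↥D => S ↑x ↑y)⁻¹ *ᵥ fun x : ↥D => (S *ᵥ v) ↑x)

lemma row_eq {S : Matrix (Fin d) (Fin d) ℝ} (hS : S.PosDef) (D : Finset (Fin d))
    (v : Fin d → ℝ) :
    (v - optRow S D v) ⬝ᵥ (S *ᵥ (v - optRow S D v)) = mval S D v := by
  unfold optRow
  rw [row_expand S (transpose_eq_of_posDef hS) D v _ (extZ_support _), extZ_restrict]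
  exact quad_eq (posdef_sub hS D) _ _

lemma mval_single {S : Matrix (Fin d) (Fin d) ℝ} (hSt : Sᵀ = S) (k : Fin d)
    (D : Finset (Fin d)) : mval S D (Pi.single k 1) = condCov S k k D := by
  have hsymm : ∀ a b : Fin d, S a b = S b a := fun a b => by
    conv_lhs => rw [← hSt, transpose_apply]
  have hv : S *ᵥ Pi.single k 1 = fun l => S k l := by
    rw [mulVec_single_one]; funext l; exact hsymm l k
  unfold mval condCov
  rw [hv]
  have h1 : (fun x : ↥D => (fun l => S k l) ↑x) = fun x : ↥D => S k ↑x := rfl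
  have h2 : (fun x : ↥D => S k ↑x) = fun x : ↥D => S ↑x k := funext fun x => hsymm k ↑x
  rw [h1]
  congr 1
  · simp
  · rw [h2]

lemma mval_pair {S : Matrix (Fin d) (Fin d) ℝ} (hS : S.PosDef) (i j : Fin d) (ψ : ℝ)
    (D : Finset (Fin d)) :
    mval S D (Pi.single i 1 + ψ • (Pi.single j 1 : Fin d → ℝ))
      = condCov S i i D + ψ ^ 2 * condCov S j j D + 2 * ψ * condCov S i j D := by
  have hSt : Sᵀ = S := transpose_eq_of_posDef hS
  have hsymm : ∀ a b : Fin d, S a b = S b a := fun a b => by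
    conv_lhs => rw [← hSt, transpose_apply]
  have hAt : (fun x y : ↥D => S ↑x ↑y)ᵀ = (fun x y : ↥D => S ↑x ↑y) :=
    transpose_eq_of_posDef (posdef_sub hS D)
  set M : Matrix ↥D ↥D ℝ := (fun x y : ↥D => S ↑x ↑y)⁻¹ with hM
  have hMt : Mᵀ = M := by rw [hM]; exact (transpose_nonsing_inv (fun x y : ↥D => S ↑x ↑y : Matrix ↥D ↥D ℝ)).trans (congrArg _ hAt)
  set v : Fin d → ℝ := Pi.single i 1 + ψ • (Pi.single j 1 : Fin d → ℝ) with hvdef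
  set B1 : ↥D → ℝ := fun x => S ↑x i with hB1
  set B2 : ↥D → ℝ := fun x => S ↑x j with hB2
  have hswap : ∀ x y : ↥D → ℝ, x ⬝ᵥ (M *ᵥ y) = y ⬝ᵥ (M *ᵥ x) := by
    intro x y
    rw [dotProduct_mulVec, ← mulVec_transpose, hMt, dotProduct_comm]
  have hv : S *ᵥ v = fun l => S l i + ψ * S l j := by
    rw [hvdef, mulVec_add, mulVec_smul, mulVec_single_one, mulVec_single_one]
    funext l
    simp [transpose_apply]
  have hc : v ⬝ᵥ (fun l => S l i + ψ * S l j)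
      = S i i + 2 * ψ * S i j + ψ ^ 2 * S j j := by
    rw [hvdef]
    simp only [add_dotProduct, smul_dotProduct, single_dotProduct, smul_eq_mul]
    rw [hsymm j i]
    ring
  have hb : (fun x : ↥D => (fun l => S l i + ψ * S l j) ↑x) = B1 + ψ • B2 := by
    funext x
    simp [hB1, hB2]
  have hl1 : (fun x : ↥D => S i ↑x) = B1 := funext fun x => hsymm i ↑x
  have hl2 : (fun x : ↥D => S j ↑x) = B2 := funext fun x => hsymm j ↑x
  unfold mval condCov
  rw [hv, hb, hc, hl1, hl2, ← hM]
  rw [add_dotProduct, smul_dotProduct, mulVec_add, mulVec_smul, dotProduct_add,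
    dotProduct_add, dotProduct_smul, dotProduct_smul, hswap B2 B1]
  simp only [smul_eq_mul]
  ring

lemma trace_rows (A S : Matrix (Fin d) (Fin d) ℝ) (hSt : Sᵀ = S) :
    (Aᵀ * A * S).trace = ∑ k, (A k) ⬝ᵥ (S *ᵥ (A k)) := by
  have hsymm : ∀ a b : Fin d, S a b = S b a := fun a b => by
    conv_lhs => rw [← hSt, transpose_apply]
  rw [Matrix.mul_assoc]
  simp only [trace, diag_apply, mul_apply, transpose_apply, dotProduct, mulVec,
    Finset.mul_sum]
  rw [Finset.sum_comm]
  refine Finset.sum_congr rfl fun k _ => Finset.sum_congr rfl fun l _ => ?_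
  refine Finset.sum_congr rfl fun m _ => ?_
  rw [hsymm l m]; ring

/-- The minimum of `tr((I-T)ᵀ(I-T)S)` over matrices `T` with row supports in the
descendant sets and the additional constraint `T_{i,j} = -ψ` equals
`∑_{k≠i} S_{k,k|d(k)} + S_{i,i|d(i)∖{j}} + ψ²S_{j,j|d(i)∖{j}} + 2ψS_{i,j|d(i)∖{j}}`. -/
theorem stmt9 {d : ℕ} (S : Matrix (Fin d) (Fin d) ℝ) (hS : S.PosDef)
    (ord : Equiv.Perm (Fin d)) (i j : Fin d) (hij : j ∈ desc ord i) (ψ : ℝ) :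
    IsLeast {x : ℝ | ∃ T : Matrix (Fin d) (Fin d) ℝ,
        (∀ k l, l ∉ desc ord k → T k l = 0) ∧ T i j = -ψ ∧
        x = ((1 - T)ᵀ * (1 - T) * S).trace}
      ((∑ k ∈ Finset.univ.erase i, condCov S k k (desc ord k)) +
        condCov S i i ((desc ord i).erase j) +
        ψ ^ 2 * condCov S j j ((desc ord i).erase j) +
        2 * ψ * condCov S i j ((desc ord i).erase j)) := by
  classical
  have hSt : Sᵀ = S := transpose_eq_of_posDef hS
  set Dk : Fin d → Finset (Fin d) :=
    fun k => if k = i then (desc ord i).erase j else desc ord k with hDk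
  set vk : Fin d → Fin d → ℝ :=
    fun k => if k = i then Pi.single i 1 + ψ • (Pi.single j 1 : Fin d → ℝ)
      else Pi.single k 1 with hvk
  have hDsub : ∀ k, Dk k ⊆ desc ord k := by
    intro k
    by_cases h : k = i
    · subst h
      simp only [hDk, if_pos rfl]
      exact Finset.erase_subset _ _
    · simp only [hDk, if_neg h]
      exact Finset.Subset.refl _
  have hsum : (∑ k ∈ Finset.univ.erase i, condCov S k k (desc ord k)) +
        condCov S i i ((desc ord i).erase j) +
        ψ ^ 2 * condCov S j j ((desc ord i).erase j) +
        2 * ψ * condCov S i j ((desc ord i).erase j)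
      = ∑ k, mval S (Dk k) (vk k) := by
    rw [← Finset.sum_erase_add Finset.univ _ (Finset.mem_univ i)]
    have h1 : ∀ k ∈ Finset.univ.erase i, mval S (Dk k) (vk k)
        = condCov S k k (desc ord k) := by
      intro k hk
      have hki : k ≠ i := Finset.ne_of_mem_erase hk
      simp only [hDk, hvk, if_neg hki]
      exact mval_single hSt k _
    have h2 : mval S (Dk i) (vk i)
        = condCov S i i ((desc ord i).erase j)
          + ψ ^ 2 * condCov S j j ((desc ord i).erase j)
          + 2 * ψ * condCov S i j ((desc ord i).erase j) := by
      simp only [hDk, hvk, if_pos rfl]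
      exact mval_pair hS i j ψ _
    rw [Finset.sum_congr rfl h1, h2]
    ring
  rw [hsum]
  have hrow : ∀ (T : Matrix (Fin d) (Fin d) ℝ) (k : Fin d),
      (1 - T) k = vk k - fun l =>
        T k l + (if k = i then ψ * (Pi.single j 1 : Fin d → ℝ) l else 0) := by
    intro T k
    funext l
    have h1 : (1 - T) k l = (if k = l then 1 else 0) - T k l := by
      simp [Matrix.sub_apply, Matrix.one_apply]
    rw [h1, hvk]
    by_cases hk : k = i
    · subst hk
      by_cases hkl : k = l
      · subst hkl
        simp [Pi.single_apply]
        try ring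
      · have hlk : ¬ l = k := fun h => hkl h.symm
        simp [Pi.single_apply, hkl, hlk]
        try ring
    · by_cases hkl : k = l
      · subst hkl
        simp [Pi.single_apply, hk]
        try ring
      · have hlk : ¬ l = k := fun h => hkl h.symm
        simp [Pi.single_apply, hk, hkl, hlk]
        try ring
  constructor
  · -- membership
    refine ⟨fun k l => optRow S (Dk k) (vk k) l
      - (if k = i then ψ * (Pi.single j 1 : Fin d → ℝ) l else 0), ?_, ?_, ?_⟩
    · intro k l hl
      dsimp only
      have h1 : optRow S (Dk k) (vk k) l = 0 :=
        extZ_support _ l (fun hmem => hl (hDsub k hmem))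
      have h2 : (if k = i then ψ * (Pi.single j 1 : Fin d → ℝ) l else 0) = 0 := by
        split_ifs with h
        · subst h
          have hlj : l ≠ j := fun he => hl (he ▸ hij)
          simp [Pi.single_apply, hlj]
        · rfl
      rw [h1, h2, sub_zero]
    · dsimp only
      have h1 : optRow S (Dk i) (vk i) j = 0 := by
        apply extZ_support
        simp [hDk]
      simp [h1]
    · rw [trace_rows _ S hSt]
      refine Finset.sum_congr rfl fun k _ => ?_
      erw [hrow _ k]
      have hfix : (fun l => ((fun k l => optRow S (Dk k) (vk k) l
            - (if k = i then ψ * (Pi.single j 1 : Fin d → ℝ) l else 0)) k l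
          + if k = i then ψ * (Pi.single j 1 : Fin d → ℝ) l else 0))
          = optRow S (Dk k) (vk k) := by
        funext l
        dsimp only
        ring
      rw [hfix]
      exact (row_eq hS (Dk k) (vk k)).symm
  · -- lower bound
    rintro x ⟨T, hsupp, hTij, rfl⟩
    rw [trace_rows _ S hSt]
    apply Finset.sum_le_sum
    intro k _
    rw [hrow T k]
    apply row_lb hS
    intro l hl
    by_cases hk : k = i
    · subst hk
      rw [if_pos rfl]
      by_cases hlj : l = j
      · subst hlj
        simp [hTij]
      · have hnd : l ∉ desc ord k := by
          intro hmem
          apply hl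
          simp only [hDk, if_pos rfl, Finset.mem_erase]
          exact ⟨hlj, hmem⟩
        simp [hsupp k l hnd, Pi.single_apply, hlj]
    · have hnd : l ∉ desc ord k := by
        intro hmem
        apply hl
        simp only [hDk, if_neg hk]
        exact hmem
      rw [if_neg hk, hsupp k l hnd, add_zero]
end

section
/- Let Σ = σ²(I-B)^{-1}(I-B)^{-T} for strictly lower triangular B (ordering 1 < 2 < ... < d) and σ² > 0, and set Ω := Σ^{-1}. Then for every node k, the Schur complement Ω_{k,k|d(k)} equals σ^{-2}, where d(k) := {k+1, ..., d} is the set of nodes succeeding k in the ordering. -/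
open Matrix

/-- For `Σ = σ²(I-B)⁻¹(I-B)⁻ᵀ` with `B` strictly lower triangular and `Ω = Σ⁻¹`,
the Schur complement of each node given its descendants `d(k) = {l : k < l}`
equals `σ⁻²`. -/
theorem stmt14 {d : ℕ} (B : Matrix (Fin d) (Fin d) ℝ)
    (hB : ∀ i j : Fin d, i ≤ j → B i j = 0)
    (σ2 : ℝ) (hσ : 0 < σ2) (k : Fin d) :
    condCov (σ2 • ((1 - B)⁻¹ * ((1 - B)⁻¹)ᵀ))⁻¹ k k (Finset.Ioi k) = σ2⁻¹ := by
  classical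
  set A : Matrix (Fin d) (Fin d) ℝ := 1 - B with hAdef
  have hAlow : ∀ i j : Fin d, i < j → A i j = 0 := by
    intro i j hij
    simp [hAdef, Matrix.sub_apply, Matrix.one_apply, hij.ne, hB i j hij.le]
  have hAdiag : ∀ i, A i i = 1 := by
    intro i
    simp [hAdef, Matrix.sub_apply, Matrix.one_apply, hB i i le_rfl]
  -- determinant of A is 1
  have hAbt : (Aᵀ).BlockTriangular id := by
    intro i j hij
    exact hAlow j i hij
  have hdetA : A.det = 1 := by
    rw [← Matrix.det_transpose, Matrix.det_of_upperTriangular hAbt]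
    simp [hAdiag]
  have hAunit : IsUnit A.det := by simp [hdetA]
  have hATunit : IsUnit (Aᵀ).det := by simp [Matrix.det_transpose, hdetA]
  -- Ω = σ2⁻¹ • (Aᵀ * A)
  have hσne : σ2 ≠ 0 := ne_of_gt hσ
  have hΩ : (σ2 • (A⁻¹ * (A⁻¹)ᵀ))⁻¹ = σ2⁻¹ • (Aᵀ * A) := by
    apply Matrix.inv_eq_right_inv
    rw [Matrix.smul_mul, Matrix.mul_smul, smul_smul, mul_inv_cancel₀ hσne, one_smul]
    rw [Matrix.transpose_nonsing_inv, Matrix.mul_assoc, ← Matrix.mul_assoc (Aᵀ)⁻¹,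
      Matrix.nonsing_inv_mul _ hATunit, Matrix.one_mul, Matrix.nonsing_inv_mul _ hAunit]
  rw [hΩ]
  -- set up the submatrices
  set D : Finset (Fin d) := Finset.Ioi k with hD
  set M : Matrix ↥D ↥D ℝ := fun x y => A x y with hM
  set v : ↥D → ℝ := fun x => A x k with hv
  have hsum : ∀ f : Fin d → ℝ, ∑ x : ↥D, f x = ∑ l ∈ D, f l := by
    intro f
    rw [Finset.univ_eq_attach]
    exact Finset.sum_attach D f
  have hMbt : (Mᵀ).BlockTriangular id := by
    intro i j hij
    exact hAlow (j : Fin d) (i : Fin d) hij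
  have hdetM : M.det = 1 := by
    rw [← Matrix.det_transpose, Matrix.det_of_upperTriangular hMbt]
    simp [hM, hAdiag]
    exact Finset.prod_eq_one fun i _ => hAdiag i
  have hMunit : IsUnit M.det := by simp [hdetM]
  have hMTunit : IsUnit (Mᵀ).det := by simp [Matrix.det_transpose, hdetM]
  have hWunit : IsUnit (Mᵀ * M).det := by
    rw [Matrix.det_mul]
    exact hMTunit.mul hMunit
  -- entrywise identities
  have hmemD : ∀ x : Fin d, x ∈ D ↔ k < x := fun x => Finset.mem_Ioi
  have hkk : (Aᵀ * A) k k = 1 + v ⬝ᵥ v := by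
    rw [Matrix.mul_apply]
    have hsub : ∑ l, Aᵀ k l * A l k = ∑ l ∈ insert k D, Aᵀ k l * A l k := by
      refine (Finset.sum_subset (Finset.subset_univ _) ?_).symm
      intro l _ hl
      simp only [Finset.mem_insert, hmemD, not_or, not_lt] at hl
      have : l < k := lt_of_le_of_ne hl.2 hl.1
      rw [Matrix.transpose_apply, hAlow l k this, mul_zero]
    rw [hsub, Finset.sum_insert (by simp [hD]), Matrix.transpose_apply, hAdiag,
      one_mul]
    congr 1
    rw [dotProduct, hsum fun l => A l k * A l k]
    exact Finset.sum_congr rfl fun l _ => rfl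
  have hrow : ∀ x : ↥D, (Aᵀ * A) k (x : Fin d) = (Mᵀ *ᵥ v) x := by
    intro x
    have hvx : (Mᵀ *ᵥ v) x = ∑ l ∈ D, A l k * A l (x : Fin d) := by
      simp only [Matrix.mulVec, dotProduct, hM, hv, Matrix.transpose_apply]
      exact (Finset.sum_congr rfl fun i _ => mul_comm _ _).trans
        (hsum fun l => A l k * A l (x : Fin d))
    rw [Matrix.mul_apply, hvx]
    simp only [Matrix.transpose_apply]
    refine (Finset.sum_subset (Finset.subset_univ D) ?_).symm
    intro l _ hl
    rw [hmemD, not_lt] at hl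
    have : l < (x : Fin d) := lt_of_le_of_lt hl ((hmemD x).mp x.2)
    rw [hAlow l x this, mul_zero]
  have hcol : ∀ x : ↥D, (Aᵀ * A) (x : Fin d) k = (Mᵀ *ᵥ v) x := by
    intro x
    rw [← hrow x, Matrix.mul_apply, Matrix.mul_apply]
    exact Finset.sum_congr rfl fun l _ => by
      rw [Matrix.transpose_apply, Matrix.transpose_apply]; exact mul_comm _ _
  have hblock : ∀ x y : ↥D, (Aᵀ * A) (x : Fin d) (y : Fin d) = (Mᵀ * M) x y := by
    intro x y
    have hxy : (Mᵀ * M) x y = ∑ l ∈ D, A l (x : Fin d) * A l (y : Fin d) := by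
      simp only [Matrix.mul_apply, hM, Matrix.transpose_apply]
      exact hsum fun l => A l (x : Fin d) * A l (y : Fin d)
    rw [Matrix.mul_apply, hxy]
    simp only [Matrix.transpose_apply]
    refine (Finset.sum_subset (Finset.subset_univ D) ?_).symm
    intro l _ hl
    rw [hmemD, not_lt] at hl
    have : l < (x : Fin d) := lt_of_le_of_lt hl ((hmemD x).mp x.2)
    rw [hAlow l x this, zero_mul]
  -- smul inverse of W
  have hWeq : ((fun x y : ↥D => (σ2⁻¹ • (Aᵀ * A)) (x : Fin d) (y : Fin d)) :
      Matrix ↥D ↥D ℝ) = σ2⁻¹ • (Mᵀ * M) := by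
    funext x y
    simp only [Matrix.smul_apply, smul_eq_mul, hblock x y]
  have hWinv : (σ2⁻¹ • (Mᵀ * M) : Matrix ↥D ↥D ℝ)⁻¹ = σ2 • (Mᵀ * M)⁻¹ := by
    apply Matrix.inv_eq_right_inv
    rw [Matrix.smul_mul, Matrix.mul_smul, smul_smul, inv_mul_cancel₀ hσne, one_smul,
      Matrix.mul_nonsing_inv _ hWunit]
  -- main computation
  unfold condCov
  have hu : (fun x : ↥D => (σ2⁻¹ • (Aᵀ * A)) k (x : Fin d)) = σ2⁻¹ • (Mᵀ *ᵥ v) := by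
    funext x
    simp only [Matrix.smul_apply, Pi.smul_apply, smul_eq_mul, hrow x]
  have hu' : (fun x : ↥D => (σ2⁻¹ • (Aᵀ * A)) (x : Fin d) k) = σ2⁻¹ • (Mᵀ *ᵥ v) := by
    funext x
    simp only [Matrix.smul_apply, Pi.smul_apply, smul_eq_mul, hcol x]
  rw [hu, hu', hWeq, hWinv]
  have hkey : (Mᵀ *ᵥ v) ⬝ᵥ ((Mᵀ * M)⁻¹ *ᵥ (Mᵀ *ᵥ v)) = v ⬝ᵥ v := by
    have h1 : (M⁻¹ * Mᵀ⁻¹) *ᵥ (Mᵀ *ᵥ v) = M⁻¹ *ᵥ v := by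
      rw [Matrix.mulVec_mulVec, Matrix.mul_assoc,
        Matrix.nonsing_inv_mul _ hMTunit, Matrix.mul_one]
    rw [Matrix.mul_inv_rev, h1, Matrix.mulVec_transpose, Matrix.dotProduct_mulVec,
      Matrix.vecMul_vecMul, Matrix.mul_nonsing_inv _ hMunit, Matrix.vecMul_one]
  rw [smul_dotProduct, Matrix.mulVec_smul, dotProduct_smul,
    Matrix.smul_mulVec, dotProduct_smul, hkey]
  simp only [Matrix.smul_apply, smul_eq_mul, hkk]
  field_simp
  ring
end

section
/- Let B be strictly lower triangular with respect to the ordering 1 < ... < d, σ² > 0, Σ = σ²(I-B)^{-1}(I-B)^{-T}, and Ω = Σ^{-1}. Fix i < j. Then the total causal effect C(i→j) := ((I-B)^{-1})_{j,i} satisfies C(i→j) = - τ_j( Ω_{i,d(i)} (Ω_{d(i),d(i)})^{-1} ), where d(i) = {i+1,...,d} and τ_j extracts the coordinate corresponding to index j. -/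
open Matrix

/-- For `Σ = σ²(I-B)⁻¹(I-B)⁻ᵀ` with `B` strictly lower triangular, `Ω = Σ⁻¹` and
`i < j`, the total causal effect `C(i→j) = ((I-B)⁻¹)_{j,i}` equals
`-τ_j(Ω_{i,d(i)}(Ω_{d(i),d(i)})⁻¹)` where `d(i) = {i+1,...,d}`. -/
theorem stmt15 {d : ℕ} (B : Matrix (Fin d) (Fin d) ℝ)
    (hB : ∀ i j : Fin d, i ≤ j → B i j = 0)
    (σ2 : ℝ) (hσ : 0 < σ2) (i j : Fin d) (hij : i < j)
    (Ω : Matrix (Fin d) (Fin d) ℝ)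
    (hΩ : Ω = (σ2 • ((1 - B)⁻¹ * ((1 - B)⁻¹)ᵀ))⁻¹) :
    (1 - B)⁻¹ j i =
      -(((fun x : ↥(Finset.Ioi i) => Ω i x) ᵥ*
          (fun x y : ↥(Finset.Ioi i) => Ω x y)⁻¹)
        ⟨j, Finset.mem_Ioi.mpr hij⟩) := by
  set S := Finset.Ioi i with hSdef
  set A : Matrix (Fin d) (Fin d) ℝ := 1 - B with hAdef
  have hA0 : ∀ p q : Fin d, p < q → A p q = 0 := by
    intro p q h
    simp [hAdef, Matrix.sub_apply, Matrix.one_apply, Fin.ne_of_lt h, hB p q h.le]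
  have hA1 : ∀ p : Fin d, A p p = 1 := by
    intro p
    simp [hAdef, Matrix.sub_apply, Matrix.one_apply, hB p p le_rfl]
  have hAt : A.BlockTriangular OrderDual.toDual := by
    intro p q h
    exact hA0 p q (by simpa using h)
  have hdet : A.det = 1 := by
    rw [Matrix.det_of_lowerTriangular A hAt]
    simp [hA1]
  have hdetu : IsUnit A.det := by rw [hdet]; exact isUnit_one
  haveI : Invertible A := A.invertibleOfIsUnitDet hdetu
  have hAinvt : A⁻¹.BlockTriangular OrderDual.toDual :=
    Matrix.blockTriangular_inv_of_blockTriangular hAt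
  have hAinv0 : ∀ p q : Fin d, p < q → A⁻¹ p q = 0 := by
    intro p q h
    exact hAinvt (by simpa using h)
  have hAinv1 : A⁻¹ i i = 1 := by
    have h : (A * A⁻¹) i i = (1 : Matrix (Fin d) (Fin d) ℝ) i i := by
      rw [Matrix.mul_nonsing_inv A hdetu]
    rw [Matrix.mul_apply, Finset.sum_eq_single i] at h
    · rw [hA1 i, one_mul] at h
      simpa using h
    · intro b _ hb
      rcases lt_or_gt_of_ne hb with h' | h'
      · rw [hAinv0 b i h', mul_zero]
      · rw [hA0 i b h', zero_mul]
    · simp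
  have hΩ' : Ω = σ2⁻¹ • (Aᵀ * A) := by
    rw [hΩ]
    apply Matrix.inv_eq_right_inv
    have hT : (A⁻¹)ᵀ = (Aᵀ)⁻¹ := Matrix.transpose_nonsing_inv A
    rw [hT, Matrix.smul_mul, Matrix.mul_smul, smul_smul,
      mul_inv_cancel₀ hσ.ne', one_smul, Matrix.mul_assoc,
      ← Matrix.mul_assoc (Aᵀ)⁻¹,
      Matrix.nonsing_inv_mul (Aᵀ) (by rwa [Matrix.det_transpose]),
      Matrix.one_mul, Matrix.nonsing_inv_mul A hdetu]
  have hsym : ∀ p q : Fin d, Ω p q = Ω q p := by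
    intro p q
    rw [hΩ']
    simp only [Matrix.smul_apply, Matrix.mul_apply, Matrix.transpose_apply, smul_eq_mul]
    congr 1
    exact Finset.sum_congr rfl fun k _ => by ring
  have hΩpos : ∀ z : Fin d → ℝ, z ≠ 0 → 0 < z ⬝ᵥ (Ω *ᵥ z) := by
    intro z hz
    have hAz : A *ᵥ z ≠ 0 := by
      have hinj := Matrix.mulVec_injective_iff_isUnit.mpr
        ((Matrix.isUnit_iff_isUnit_det A).mpr hdetu)
      intro hc
      exact hz (hinj (by simpa using hc))
    have h1 : z ⬝ᵥ (Ω *ᵥ z) = σ2⁻¹ * ((A *ᵥ z) ⬝ᵥ (A *ᵥ z)) := by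
      rw [hΩ', Matrix.smul_mulVec, dotProduct_smul, ← Matrix.mulVec_mulVec,
        Matrix.dotProduct_mulVec, Matrix.vecMul_transpose, smul_eq_mul]
    rw [h1]
    have h2 : 0 < (A *ᵥ z) ⬝ᵥ (A *ᵥ z) := by
      have h3 := Matrix.dotProduct_star_self_pos_iff (v := A *ᵥ z)
      simp only [star_trivial] at h3
      exact h3.mpr hAz
    exact mul_pos (inv_pos.mpr hσ) h2
  -- sum extension lemma
  have hsum : ∀ (x : ↥S → ℝ) (y : Fin d → ℝ), (∀ q : ↥S, y q = x q) →
      (∀ n, n ∉ S → y n = 0) → ∀ g : Fin d → ℝ,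
      ∑ n : Fin d, g n * y n = ∑ q : ↥S, g q * x q := by
    intro x y h1 h2 g
    have h3 : ∑ n : Fin d, g n * y n = ∑ n ∈ S, g n * y n := by
      refine (Finset.sum_subset (Finset.subset_univ S) ?_).symm
      intro n _ hn
      rw [h2 n hn, mul_zero]
    rw [h3, ← Finset.sum_attach S (fun n => g n * y n), Finset.univ_eq_attach]
    exact Finset.sum_congr rfl fun q _ => by rw [h1 q]
  set M : Matrix ↥S ↥S ℝ := fun x y => Ω x y with hMdef
  have hMpd : M.PosDef := by
    refine Matrix.posDef_iff_dotProduct_mulVec.mpr ⟨?_, ?_⟩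
    · ext p q
      simp only [Matrix.conjTranspose_apply, star_trivial]
      exact hsym q p
    · intro x hx
      set y : Fin d → ℝ := fun n => if h : n ∈ S then x ⟨n, h⟩ else 0 with hy
      have hy1 : ∀ q : ↥S, y q = x q := by
        intro q
        rw [hy]
        simp only
        rw [dif_pos q.2]
      have hy2 : ∀ n, n ∉ S → y n = 0 := by
        intro n hn
        rw [hy]
        simp only
        rw [dif_neg hn]
      have hy0 : y ≠ 0 := by
        intro hc
        apply hx
        funext q
        have := congrFun hc q.1
        rw [hy1 q] at this
        simpa using this
      have hin : ∀ q : ↥S, (Ω *ᵥ y) (q : Fin d) = (M *ᵥ x) q := by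
        intro q
        simp only [Matrix.mulVec, dotProduct]
        exact hsum x y hy1 hy2 (fun m => Ω q m)
      have key : y ⬝ᵥ (Ω *ᵥ y) = star x ⬝ᵥ (M *ᵥ x) := by
        simp only [star_trivial]
        calc y ⬝ᵥ (Ω *ᵥ y) = ∑ n, (Ω *ᵥ y) n * y n := by
              simp only [dotProduct]
              exact Finset.sum_congr rfl fun n _ => by ring
          _ = ∑ q : ↥S, (Ω *ᵥ y) q * x q := hsum x y hy1 hy2 _
          _ = ∑ q : ↥S, (M *ᵥ x) q * x q := by
              exact Finset.sum_congr rfl fun q _ => by rw [hin q]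
          _ = x ⬝ᵥ (M *ᵥ x) := by
              simp only [dotProduct]
              exact Finset.sum_congr rfl fun q _ => by ring
      rw [← key]
      exact hΩpos y hy0
  have hMdetu : IsUnit M.det := (Matrix.isUnit_iff_isUnit_det M).mp hMpd.isUnit
  -- the key linear relation
  have hkey : ∀ q : Fin d, i < q → Ω i q + ∑ x ∈ S, A⁻¹ x i * Ω x q = 0 := by
    intro q hq
    have h1 : Ω * A⁻¹ = σ2⁻¹ • Aᵀ := by
      rw [hΩ', Matrix.smul_mul, Matrix.mul_assoc, Matrix.mul_nonsing_inv A hdetu,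
        Matrix.mul_one]
    have h2 : (Ω * A⁻¹) q i = 0 := by
      rw [h1]
      simp [Matrix.smul_apply, Matrix.transpose_apply, hA0 i q hq]
    rw [Matrix.mul_apply] at h2
    have huniv : Finset.Iic i ∪ S = Finset.univ := by
      rw [hSdef]
      ext x
      simp [le_or_gt]
    have hdisj : Disjoint (Finset.Iic i) S := by
      rw [hSdef, Finset.disjoint_left]
      intro a ha hb
      exact absurd (Finset.mem_Ioi.mp hb) (not_lt.mpr (Finset.mem_Iic.mp ha))
    have h3 : (∑ x ∈ Finset.Iic i, Ω q x * A⁻¹ x i) + ∑ x ∈ S, Ω q x * A⁻¹ x i = 0 := by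
      rw [← Finset.sum_union hdisj, huniv]
      exact h2
    have h4 : ∑ x ∈ Finset.Iic i, Ω q x * A⁻¹ x i = Ω q i := by
      rw [Finset.sum_eq_single_of_mem i (Finset.mem_Iic.mpr le_rfl)]
      · rw [hAinv1, mul_one]
      · intro b hb hbne
        rw [hAinv0 b i (lt_of_le_of_ne (Finset.mem_Iic.mp hb) hbne), mul_zero]
    rw [h4] at h3
    rw [hsym i q]
    calc Ω q i + ∑ x ∈ S, A⁻¹ x i * Ω x q
        = Ω q i + ∑ x ∈ S, Ω q x * A⁻¹ x i := by
          congr 1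
          exact Finset.sum_congr rfl fun x _ => by rw [hsym x q]; ring
      _ = 0 := h3
  -- final assembly
  have hrel : (fun x : ↥S => Ω i x) = -((fun x : ↥S => A⁻¹ x i) ᵥ* M) := by
    funext q
    simp only [Pi.neg_apply, Matrix.vecMul, dotProduct]
    have hq : i < (q : Fin d) := Finset.mem_Ioi.mp q.2
    have h5 : ∑ x : ↥S, A⁻¹ (x : Fin d) i * M x q = ∑ x ∈ S, A⁻¹ x i * Ω x q := by
      exact Finset.sum_coe_sort S (fun x => A⁻¹ x i * Ω x (q : Fin d))
    rw [h5]
    have := hkey q hq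
    linarith
  have hfinal : ((fun x : ↥S => Ω i x) ᵥ* M⁻¹) = -(fun x : ↥S => A⁻¹ x i) := by
    rw [hrel, Matrix.neg_vecMul, Matrix.vecMul_vecMul, Matrix.mul_nonsing_inv M hMdetu,
      Matrix.vecMul_one]
  rw [hfinal]
  simp
end

section
/- Let X = (I-B)^{-1}ε where B is strictly lower triangular with ordering 1 < ... < d and ε ~ N(0, σ² I_d). Then for indices i < j, the regression coefficient of X_i in the conditional expectation E[X_j | do(X_i = x_i)], namely Σ_{j,i|p(i)} (Σ_{i,i|p(i)})^{-1} with p(i) = {1,...,i-1} and Σ = Cov(X), equals ((I-B)^{-1})_{j,i}. -/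
open Matrix

/-- In a linear Gaussian acyclic SEM `X = (I-B)⁻¹ε`, `ε ~ N(0,σ²I)`, with covariance
`Σ = σ²(I-B)⁻¹(I-B)⁻ᵀ`, the adjustment-formula total effect
`Σ_{j,i|p(i)}(Σ_{i,i|p(i)})⁻¹` with `p(i) = {1,...,i-1}` equals `((I-B)⁻¹)_{j,i}`. -/
theorem stmt16 {d : ℕ} (B : Matrix (Fin d) (Fin d) ℝ)
    (hB : ∀ i j : Fin d, i ≤ j → B i j = 0)
    (σ2 : ℝ) (hσ : 0 < σ2) (i j : Fin d) (hij : i < j)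
    (Sg : Matrix (Fin d) (Fin d) ℝ)
    (hSg : Sg = σ2 • ((1 - B)⁻¹ * ((1 - B)⁻¹)ᵀ)) :
    condCov Sg j i (Finset.Iio i) * (condCov Sg i i (Finset.Iio i))⁻¹ =
      (1 - B)⁻¹ j i := by
  classical
  set A : Matrix (Fin d) (Fin d) ℝ := (1 - B)⁻¹ with hA
  -- `1 - B` is lower triangular with unit diagonal
  have hlt : BlockTriangular (1 - B) OrderDual.toDual := by
    intro a b hab
    have hab' : (a : Fin d) < b := hab
    simp [Matrix.sub_apply, Matrix.one_apply_ne (ne_of_lt hab'), hB a b (le_of_lt hab')]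
  have hdet : (1 - B).det = 1 := by
    rw [Matrix.det_of_lowerTriangular _ hlt]
    have : ∀ k : Fin d, (1 - B) k k = 1 := fun k => by
      simp [Matrix.sub_apply, hB k k le_rfl]
    simp [this]
  have hdetU : IsUnit (1 - B).det := by rw [hdet]; exact isUnit_one
  haveI : Invertible (1 - B) := (1 - B).invertibleOfIsUnitDet hdetU
  have hmulA : (1 - B) * A = 1 := Matrix.mul_nonsing_inv _ hdetU
  have hAmul : A * (1 - B) = 1 := Matrix.nonsing_inv_mul _ hdetU
  -- `A` is lower triangular
  have hAlt : BlockTriangular A OrderDual.toDual :=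
    blockTriangular_inv_of_blockTriangular hlt
  have hAzero : ∀ a b : Fin d, a < b → A a b = 0 := fun a b hab => hAlt hab
  -- diagonal of A is 1
  have hAdiag : ∀ a : Fin d, A a a = 1 := by
    intro a
    have h1 : ∑ k, (1 - B) a k * A k a = 1 := by
      have := congrFun (congrFun hmulA a) a
      simpa [Matrix.mul_apply, Matrix.one_apply] using this
    have h2 : ∑ k, (1 - B) a k * A k a = (1 - B) a a * A a a := by
      refine Finset.sum_eq_single a (fun k _ hk => ?_) (by simp)
      rcases lt_or_gt_of_ne hk with h | h
      · rw [hAzero k a h, mul_zero]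
      · rw [hlt (show OrderDual.toDual k < OrderDual.toDual a from h), zero_mul]
    have h3 : (1 - B) a a = 1 := by simp [Matrix.sub_apply, hB a a le_rfl]
    rw [h2, h3, one_mul] at h1
    exact h1
  -- key SEM identity: Sg = σ2 • A + Sg * Bᵀ
  have hAeq : A = 1 + B * A := by
    have h := hmulA
    rw [Matrix.sub_mul, Matrix.one_mul] at h
    rw [sub_eq_iff_eq_add] at h
    exact h
  have hkey : ∀ a b : Fin d, Sg a b = σ2 * A a b + ∑ y, Sg a y * B b y := by
    intro a b
    have hSg2 : Sg = σ2 • A + Sg * Bᵀ := by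
      calc Sg = σ2 • (A * Aᵀ) := hSg
      _ = σ2 • (A * (1 + Aᵀ * Bᵀ)) := by
          conv_lhs => rw [show Aᵀ = 1 + Aᵀ * Bᵀ by rw [← Matrix.transpose_mul,
            ← Matrix.transpose_one, ← Matrix.transpose_add, ← hAeq]]
      _ = σ2 • A + (σ2 • (A * Aᵀ)) * Bᵀ := by
          rw [Matrix.mul_add, Matrix.mul_one, smul_add, ← Matrix.mul_assoc, ← Matrix.smul_mul]
      _ = σ2 • A + Sg * Bᵀ := by rw [← hSg]
    have := congrFun (congrFun hSg2 a) b
    simpa [Matrix.add_apply, Matrix.smul_apply, Matrix.mul_apply, Matrix.transpose_apply,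
      smul_eq_mul] using this
  -- restriction of the full-index sum to `Iio b`
  have hkey' : ∀ a b : Fin d, Sg a b = σ2 * A a b + ∑ y ∈ Finset.Iio b, Sg a y * B b y := by
    intro a b
    rw [hkey a b]
    congr 1
    refine (Finset.sum_subset (Finset.subset_univ _) ?_).symm
    intro y _ hy
    rw [hB b y (le_of_not_gt (by simpa using hy)), mul_zero]
  -- the submatrix of Sg on Iio i and its inverse applied to Sg_{D,i}
  set D : Finset (Fin d) := Finset.Iio i with hD
  set M : Matrix ↥D ↥D ℝ := fun x y : ↥D => Sg x y with hM
  set w : ↥D → ℝ := fun y => B i (y : Fin d) with hw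
  have hMw : M *ᵥ w = fun x : ↥D => Sg x i := by
    funext x
    have hxlt : (x : Fin d) < i := Finset.mem_Iio.mp x.2
    have : ∑ y : ↥D, Sg x y * B i y = ∑ y ∈ D, Sg x y * B i y :=
      Finset.sum_coe_sort D (fun y => Sg x y * B i y)
    have hx0 : A x i = 0 := hAzero _ _ hxlt
    calc (M *ᵥ w) x = ∑ y : ↥D, Sg x y * B i y := by
          simp [Matrix.mulVec, dotProduct, hM, hw]
      _ = ∑ y ∈ Finset.Iio i, Sg x y * B i y := by rw [this]
      _ = Sg x i := by rw [hkey' x i, hx0, mul_zero, zero_add]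
  -- positivity of the quadratic form of M, hence M is invertible
  have hquad : ∀ v : ↥D → ℝ, v ≠ 0 → 0 < v ⬝ᵥ (M *ᵥ v) := by
    intro v hv
    set v' : Fin d → ℝ := fun k => if h : k ∈ D then v ⟨k, h⟩ else 0 with hv'
    have hv'0 : ∀ k, k ∉ D → v' k = 0 := by intro k hk; simp [hv', hk]
    have hquad_eq : v ⬝ᵥ (M *ᵥ v) = v' ⬝ᵥ (Sg *ᵥ v') := by
      have hinner : ∀ x : Fin d, (Sg *ᵥ v') x = ∑ y : ↥D, Sg x y * v y := by
        intro x
        rw [Matrix.mulVec, show (Sg x ⬝ᵥ v') = ∑ y, Sg x y * v' y from rfl]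
        rw [← Finset.sum_subset (Finset.subset_univ D)
          (fun y _ hy => by rw [hv'0 y hy, mul_zero])]
        rw [← Finset.sum_coe_sort D (fun y => Sg x y * v' y)]
        refine Finset.sum_congr rfl fun y _ => ?_
        simp [hv', y.2]
      calc v ⬝ᵥ (M *ᵥ v) = ∑ x : ↥D, v x * ∑ y : ↥D, Sg x y * v y := by
            simp [dotProduct, Matrix.mulVec, hM]
        _ = ∑ x ∈ D, v' x * (Sg *ᵥ v') x := by
            rw [← Finset.sum_coe_sort D (fun x => v' x * (Sg *ᵥ v') x)]
            refine Finset.sum_congr rfl fun x _ => ?_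
            rw [hinner x]
            simp [hv', x.2]
        _ = ∑ x : Fin d, v' x * (Sg *ᵥ v') x :=
            Finset.sum_subset (Finset.subset_univ D)
              (fun x _ hx => by rw [hv'0 x hx, zero_mul])
        _ = v' ⬝ᵥ (Sg *ᵥ v') := rfl
    have hv'ne : v' ≠ 0 := by
      intro h0
      apply hv
      funext x
      have := congrFun h0 (x : Fin d)
      simpa [hv', x.2] using this
    set u : Fin d → ℝ := Matrix.vecMul v' A with hu
    have hune : u ≠ 0 := by
      intro h0
      apply hv'ne
      have : Matrix.vecMul u (1 - B) = v' := by
        rw [hu, Matrix.vecMul_vecMul, hAmul, Matrix.vecMul_one]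
      rw [h0] at this
      rw [← this, Matrix.zero_vecMul]
    have hform : v' ⬝ᵥ (Sg *ᵥ v') = σ2 * (u ⬝ᵥ u) := by
      rw [hSg]
      rw [Matrix.smul_mulVec, dotProduct_smul, smul_eq_mul]
      congr 1
      rw [← Matrix.mulVec_mulVec, Matrix.dotProduct_mulVec, hu, Matrix.mulVec_transpose]
    have hupos : 0 < u ⬝ᵥ u := by
      rcases lt_or_eq_of_le (Finset.sum_nonneg fun k _ => mul_self_nonneg (u k)) with h | h
      · exact h
      · exact absurd (dotProduct_self_eq_zero.mp h.symm) hune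
    rw [hquad_eq, hform]
    exact mul_pos hσ hupos
  have hMdet : IsUnit M.det := by
    rw [isUnit_iff_ne_zero]
    intro h0
    obtain ⟨v, hv, hMv⟩ := Matrix.exists_mulVec_eq_zero_iff.mpr h0
    have := hquad v hv
    rw [hMv] at this
    simp at this
  -- compute the conditional covariances
  have hcond : ∀ a : Fin d, condCov Sg a i D = σ2 * A a i := by
    intro a
    have hMinv : M⁻¹ *ᵥ (fun x : ↥D => Sg x i) = w := by
      rw [← hMw, Matrix.mulVec_mulVec, Matrix.nonsing_inv_mul M hMdet, Matrix.one_mulVec]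
    have : condCov Sg a i D = Sg a i - ∑ y : ↥D, Sg a y * B i y := by
      rw [condCov]
      congr 1
      rw [show (fun x y : ↥D => Sg x y) = M from rfl, hMinv]
      simp [dotProduct, hw]
    rw [this, Finset.sum_coe_sort D (fun y => Sg a y * B i y), hkey' a i]
    ring
  rw [hcond j, hcond i, hAdiag i, mul_one, mul_comm σ2, mul_assoc,
    mul_inv_cancel₀ hσ.ne', mul_one]
end
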